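/- arXiv:2210.07827 — 5 statements merged into one kernel-verified Lean document; each statement's English description precedes it below -/
import Mathlib

section
/- Let f : ℝ → ℝ be continuously differentiable with a constant β > 0 such that f(β) ≤ 0 ≤ f(-β), let M : ℝ → ℝ be continuously differentiable and nonnegative, set f̃(u) = M(u) f(u), and choose κ ≥ max_{|ξ| ≤ β} |f̃'(ξ)|. Define N(ξ) = κ ξ + f̃(ξ). Then |N(ξ)| ≤ κ β for all ξ ∈ [-β, β]. -/
open Set

/-! Since `|f̃'| ≤ κ` on `[-β, β]`, the function `N = κ ξ + f̃` has nonnegative derivative there and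
is therefore monotone, so `N(-β) ≤ N(ξ) ≤ N(β)`. The sign conditions on `f` and `M ≥ 0` give
`f̃(β) ≤ 0 ≤ f̃(-β)`, i.e. `-κβ ≤ N(-β)` and `N(β) ≤ κβ`. -/

theorem monotoneOn_const_mul_add_of_neg_le_deriv {g : ℝ → ℝ} {a b κ : ℝ}
    (hcont : ContinuousOn g (Icc a b)) (hdiff : DifferentiableOn ℝ g (Ioo a b))
    (hderiv : ∀ x ∈ Ioo a b, -κ ≤ deriv g x) :
    MonotoneOn (fun x => κ * x + g x) (Icc a b) := by
  have hdiffN : DifferentiableOn ℝ (fun x => κ * x + g x) (Ioo a b) :=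
    (differentiableOn_id.const_mul κ).add hdiff
  refine monotoneOn_of_deriv_nonneg (convex_Icc a b)
    ((continuousOn_id.const_smul κ).add hcont) (by rwa [interior_Icc]) ?_
  intro x hx
  rw [interior_Icc] at hx
  have hgx : DifferentiableAt ℝ g x := hdiff.differentiableAt (isOpen_Ioo.mem_nhds hx)
  have hN : HasDerivAt (fun x => κ * x + g x) (κ * 1 + deriv g x) x :=
    ((hasDerivAt_id x).const_mul κ).add hgx.hasDerivAt
  rw [hN.deriv]
  linarith [hderiv x hx]

theorem abs_le_of_monotoneOn_Icc_neg {N : ℝ → ℝ} {β c : ℝ} (hN : MonotoneOn N (Icc (-β) β))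
    (hlo : -c ≤ N (-β)) (hhi : N β ≤ c) : ∀ ξ ∈ Icc (-β) β, |N ξ| ≤ c := by
  intro ξ hξ
  have hβ : -β ≤ β := hξ.1.trans hξ.2
  rw [abs_le]
  exact ⟨hlo.trans (hN (left_mem_Icc.mpr hβ) hξ hξ.1),
    (hN hξ (right_mem_Icc.mpr hβ) hξ.2).trans hhi⟩

theorem stmt_0_general (f M : ℝ → ℝ) (β κ : ℝ)
    (hf : ContDiff ℝ 1 f) (hM : ContDiff ℝ 1 M) (hMnn : ∀ x, 0 ≤ M x)
    (hfβ : f β ≤ 0) (hfmβ : 0 ≤ f (-β))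
    (hκ : ∀ ξ ∈ Set.Icc (-β) β, |deriv (fun u => M u * f u) ξ| ≤ κ) :
    ∀ ξ ∈ Set.Icc (-β) β, |κ * ξ + M ξ * f ξ| ≤ κ * β := by
  have hMf : ContDiff ℝ 1 (fun u => M u * f u) := hM.mul hf
  have hmono : MonotoneOn (fun u => κ * u + M u * f u) (Icc (-β) β) :=
    monotoneOn_const_mul_add_of_neg_le_deriv hMf.continuous.continuousOn
      (hMf.differentiable one_ne_zero).differentiableOn
      fun x hx => (abs_le.mp (hκ x (Ioo_subset_Icc_self hx))).1
  refine abs_le_of_monotoneOn_Icc_neg hmono ?_ ?_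
  · linarith [mul_nonneg (hMnn (-β)) hfmβ]
  · linarith [mul_nonpos_of_nonneg_of_nonpos (hMnn β) hfβ]

/-- With f, M continuously differentiable, M ≥ 0, f(β) ≤ 0 ≤ f(-β),
f̃ = M·f, and κ ≥ max_{|ξ|≤β} |f̃'(ξ)|, the function N(ξ) = κξ + f̃(ξ) satisfies
|N(ξ)| ≤ κβ on [-β, β]. -/
theorem stmt_0 (f M : ℝ → ℝ) (β κ : ℝ) (hβ : 0 < β)
    (hf : ContDiff ℝ 1 f) (hM : ContDiff ℝ 1 M) (hMnn : ∀ x, 0 ≤ M x)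
    (hfβ : f β ≤ 0) (hfmβ : 0 ≤ f (-β))
    (hκ : ∀ ξ ∈ Set.Icc (-β) β, |deriv (fun u => M u * f u) ξ| ≤ κ) :
    ∀ ξ ∈ Set.Icc (-β) β, |κ * ξ + M ξ * f ξ| ≤ κ * β :=
  stmt_0_general f M β κ hf hM hMnn hfβ hfmβ hκ
end

section
/- Let L be an n×n Metzler matrix with nonpositive row sums (L_{ij} ≥ 0 for i≠j, Σ_j L_{ij} ≤ 0), let κ > 0, set L^κ = L - κI, and let N : ℝ → ℝ satisfy |N(ξ)| ≤ κβ for |ξ| ≤ β. If U ∈ ℝⁿ satisfies ‖U‖_∞ ≤ β, then the ETD1 update U⁺ = e^{τ L^κ} U + τ φ₁(τ L^κ) N(U) (with N applied entrywise and φ₁(A) = A⁻¹(e^{A} - I)) satisfies ‖U⁺‖_∞ ≤ β for every τ > 0. -/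
/-!
For a Metzler matrix `A` the semigroup `exp (t • A)`, `t ≥ 0`, is entrywise nonnegative, since
`A + c • 1` is nonnegative for large `c`; if moreover the row sums of `A` are nonpositive, the row
sums of `exp (t • A)` are nonincreasing in `t`, hence at most `1`. So `exp (t • A)` is a contraction
for the sup norm, and `exp (t • (L - κ • 1))` contracts by the factor `e^{-κt}`. In the update,
the linear part has norm at most `e^{-κτ} β` and the Duhamel integral at most
`∫₀^τ e^{-κ(τ-s)} κβ ds = (1 - e^{-κτ}) β`.
-/

open scoped Matrix
open NormedSpace

namespace Matrix

variable {m : Type*} [Fintype m]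

def IsMetzler (A : Matrix m m ℝ) : Prop := ∀ i j, i ≠ j → 0 ≤ A i j

variable [DecidableEq m]

-- The library's lemmas on `exp` need a normed-algebra structure on matrices; any one will do.
attribute [local instance] Matrix.linftyOpNormedRing Matrix.linftyOpNormedAlgebra

theorem exp_apply_nonneg {A : Matrix m m ℝ} (hA : ∀ i j, 0 ≤ A i j) (i j : m) :
    0 ≤ exp A i j :=
  (Pi.hasSum.1 (Pi.hasSum.1 (exp_series_hasSum_exp' (𝕂 := ℝ) A) i) j).nonneg fun k =>
    mul_nonneg (by positivity) (pow_apply_nonneg hA k i j)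

theorem exp_add_smul_one (A : Matrix m m ℝ) (r : ℝ) :
    exp (A + r • (1 : Matrix m m ℝ)) = Real.exp r • exp A := by
  have hscalar : exp (r • (1 : Matrix m m ℝ)) = Real.exp r • 1 := by
    have := (algebraMap_exp_comm (𝕂 := ℝ) (𝔸 := Matrix m m ℝ) r).symm
    rw [Algebra.algebraMap_eq_smul_one, Algebra.algebraMap_eq_smul_one] at this
    rw [Real.exp_eq_exp_ℝ]
    exact this
  rw [exp_add_of_commute _ _ ((Commute.one_right A).smul_right r), hscalar, mul_smul_one]

theorem IsMetzler.exp_smul_apply_nonneg {A : Matrix m m ℝ} (hA : A.IsMetzler) {t : ℝ}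
    (ht : 0 ≤ t) (i j : m) : 0 ≤ exp (t • A) i j := by
  set c := ∑ k, |A k k|
  have hshift : ∀ a b, 0 ≤ (t • (A + c • 1)) a b := by
    intro a b
    rcases eq_or_ne a b with rfl | hab
    · have : |A a a| ≤ c := Finset.single_le_sum (f := fun k => |A k k|)
        (fun k _ => abs_nonneg _) (Finset.mem_univ a)
      simpa using mul_nonneg ht (by linarith [neg_abs_le (A a a)] : 0 ≤ A a a + c)
    · simpa [hab] using mul_nonneg ht (hA a b hab)
  have : t • A = t • (A + c • 1) + (-(t * c)) • 1 := by module
  rw [this, exp_add_smul_one, smul_apply, smul_eq_mul]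
  exact mul_nonneg (Real.exp_nonneg _) (exp_apply_nonneg hshift i j)

theorem IsMetzler.sum_exp_smul_apply_le_one {A : Matrix m m ℝ} (hA : A.IsMetzler)
    (hrow : ∀ i, ∑ j, A i j ≤ 0) {t : ℝ} (ht : 0 ≤ t) (i : m) :
    ∑ j, exp (t • A) i j ≤ 1 := by
  let rowSum : Matrix m m ℝ →L[ℝ] ℝ :=
    ∑ j, (ContinuousLinearMap.proj (R := ℝ) (φ := fun _ : m => ℝ) j).comp
      (ContinuousLinearMap.proj (R := ℝ) (φ := fun _ : m => m → ℝ) i)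
  have hrowSum (M : Matrix m m ℝ) : rowSum M = ∑ j, M i j := by
    rw [_root_.sum_apply]
    rfl
  have hderiv (s : ℝ) :
      HasDerivAt (fun s => ∑ j, exp (s • A) i j) (∑ j, (exp (s • A) * A) i j) s := by
    have := rowSum.hasFDerivAt.comp_hasDerivAt s (hasDerivAt_exp_smul_const (𝕂 := ℝ) A s)
    simp only [Function.comp_def, hrowSum] at this
    exact this.congr_deriv (hrowSum _)
  have hanti : AntitoneOn (fun s : ℝ => ∑ j, exp (s • A) i j) (Set.Ici 0) := by
    refine antitoneOn_of_hasDerivWithinAt_nonpos (convex_Ici 0)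
      (fun s _ => (hderiv s).continuousAt.continuousWithinAt)
      (fun s _ => (hderiv s).hasDerivWithinAt) fun s hs => ?_
    rw [interior_Ici] at hs
    simp only [mul_apply]
    rw [Finset.sum_comm]
    simp_rw [← Finset.mul_sum]
    exact Finset.sum_nonpos fun k _ =>
      mul_nonpos_of_nonneg_of_nonpos (hA.exp_smul_apply_nonneg hs.le i k) (hrow k)
  simpa [one_apply] using hanti Set.self_mem_Ici ht ht

theorem IsMetzler.norm_exp_smul_mulVec_le {A : Matrix m m ℝ} (hA : A.IsMetzler)
    (hrow : ∀ i, ∑ j, A i j ≤ 0) {t : ℝ} (ht : 0 ≤ t) (v : m → ℝ) :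
    ‖exp (t • A) *ᵥ v‖ ≤ ‖v‖ := by
  refine (pi_norm_le_iff_of_nonneg (norm_nonneg v)).2 fun i => ?_
  have hE := hA.exp_smul_apply_nonneg ht i
  calc ‖(exp (t • A) *ᵥ v) i‖ ≤ ∑ j, exp (t • A) i j * ‖v‖ := by
        refine (norm_sum_le _ _).trans (Finset.sum_le_sum fun j _ => ?_)
        rw [norm_mul, Real.norm_of_nonneg (hE j)]
        exact mul_le_mul_of_nonneg_left (norm_le_pi_norm v j) (hE j)
    _ = (∑ j, exp (t • A) i j) * ‖v‖ := (Finset.sum_mul ..).symm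
    _ ≤ ‖v‖ := mul_le_of_le_one_left (norm_nonneg v) (hA.sum_exp_smul_apply_le_one hrow ht i)

theorem IsMetzler.norm_exp_smul_sub_smul_one_mulVec_le {A : Matrix m m ℝ} (hA : A.IsMetzler)
    (hrow : ∀ i, ∑ j, A i j ≤ 0) (κ : ℝ) {t : ℝ} (ht : 0 ≤ t) (v : m → ℝ) :
    ‖exp (t • (A - κ • 1)) *ᵥ v‖ ≤ Real.exp (-(κ * t)) * ‖v‖ := by
  have : t • (A - κ • 1) = t • A + (-(κ * t)) • 1 := by module
  rw [this, exp_add_smul_one, smul_mulVec, norm_smul, Real.norm_of_nonneg (Real.exp_nonneg _)]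
  exact mul_le_mul_of_nonneg_left (hA.norm_exp_smul_mulVec_le hrow ht v) (Real.exp_nonneg _)

end Matrix

theorem integral_exp_neg_mul_sub_mul (κ τ : ℝ) :
    ∫ s in (0 : ℝ)..τ, Real.exp (-(κ * (τ - s))) * κ = 1 - Real.exp (-(κ * τ)) := by
  have hderiv : ∀ s ∈ Set.uIcc 0 τ, HasDerivAt (fun u => Real.exp (-(κ * (τ - u))))
      (Real.exp (-(κ * (τ - s))) * κ) s := fun s _ => by
    simpa using ((((hasDerivAt_id s).const_sub τ).const_mul κ).neg).exp
  rw [intervalIntegral.integral_eq_sub_of_hasDerivAt hderiv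
    (Continuous.intervalIntegrable (by fun_prop) _ _)]
  simp

theorem stmt_10_general {n : ℕ} (L : Matrix (Fin n) (Fin n) ℝ)
    (hoff : ∀ i j, i ≠ j → 0 ≤ L i j)
    (hrow : ∀ i, ∑ j, L i j ≤ 0)
    (κ β τ : ℝ) (hτ : 0 < τ)
    (N : ℝ → ℝ) (hN : ∀ ξ : ℝ, |ξ| ≤ β → |N ξ| ≤ κ * β)
    (U : Fin n → ℝ) (hU : ‖U‖ ≤ β) :
    ‖(NormedSpace.exp (τ • (L - κ • (1 : Matrix (Fin n) (Fin n) ℝ)))).mulVec U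
        + ∫ s in (0 : ℝ)..τ,
            (NormedSpace.exp ((τ - s) • (L - κ • (1 : Matrix (Fin n) (Fin n) ℝ)))).mulVec
              (fun i => N (U i))‖ ≤ β := by
  have hL : L.IsMetzler := hoff
  have hκβ : 0 ≤ κ * β := (abs_nonneg _).trans (hN 0 (by simpa using (norm_nonneg U).trans hU))
  have hNU : ‖fun i => N (U i)‖ ≤ κ * β :=
    (pi_norm_le_iff_of_nonneg hκβ).2 fun i => hN _ ((norm_le_pi_norm U i).trans hU)
  have hfree : ‖exp (τ • (L - κ • 1)) *ᵥ U‖ ≤ Real.exp (-(κ * τ)) * β :=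
    (hL.norm_exp_smul_sub_smul_one_mulVec_le hrow κ hτ.le U).trans (by gcongr)
  have hforced : ‖∫ s in (0 : ℝ)..τ, exp ((τ - s) • (L - κ • 1)) *ᵥ fun i => N (U i)‖
      ≤ (1 - Real.exp (-(κ * τ))) * β := by
    rw [← integral_exp_neg_mul_sub_mul, ← intervalIntegral.integral_mul_const]
    refine intervalIntegral.norm_integral_le_of_norm_le hτ.le
      (MeasureTheory.ae_of_all _ fun s hs => ?_) (Continuous.intervalIntegrable (by fun_prop) _ _)
    refine (hL.norm_exp_smul_sub_smul_one_mulVec_le hrow κ (sub_nonneg.2 hs.2) _).trans ?_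
    rw [mul_assoc]
    gcongr
  calc _ ≤ _ := norm_add_le _ _
    _ ≤ Real.exp (-(κ * τ)) * β + (1 - Real.exp (-(κ * τ))) * β := add_le_add hfree hforced
    _ = β := by ring

/-- discrete MBP of the fully discrete ETD1 scheme. With L Metzler
with nonpositive row sums, L^κ = L - κI, |N| ≤ κβ on [-β,β] and ‖U‖_∞ ≤ β, the
ETD1 update U⁺ = e^{τL^κ}U + ∫₀^τ e^{(τ-s)L^κ} N(U) ds (the Duhamel form of
U⁺ = e^{τL^κ}U + τφ₁(τL^κ)N(U)) satisfies ‖U⁺‖_∞ ≤ β for every τ > 0. -/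
theorem stmt_10 {n : ℕ} (L : Matrix (Fin n) (Fin n) ℝ)
    (hoff : ∀ i j, i ≠ j → 0 ≤ L i j)
    (hrow : ∀ i, ∑ j, L i j ≤ 0)
    (κ β τ : ℝ) (hκ : 0 < κ) (hβ : 0 < β) (hτ : 0 < τ)
    (N : ℝ → ℝ) (hN : ∀ ξ : ℝ, |ξ| ≤ β → |N ξ| ≤ κ * β)
    (U : Fin n → ℝ) (hU : ‖U‖ ≤ β) :
    ‖(NormedSpace.exp (τ • (L - κ • (1 : Matrix (Fin n) (Fin n) ℝ)))).mulVec U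
        + ∫ s in (0 : ℝ)..τ,
            (NormedSpace.exp ((τ - s) • (L - κ • (1 : Matrix (Fin n) (Fin n) ℝ)))).mulVec
              (fun i => N (U i))‖ ≤ β :=
  stmt_10_general L hoff hrow κ β τ hτ N hN U hU
end

section
/- Let u : ℝⁿ → ℝ be the solution of the linear ODE system w'(s) = L^κ w(s) + b, w(0) = w₀, where L^κ = L - κI with L Metzler with nonpositive row sums, κ > 0, and b ∈ ℝⁿ with ‖b‖_∞ ≤ κβ and ‖w₀‖_∞ ≤ β. Then ‖w(s)‖_∞ ≤ β for all s ≥ 0. -/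
open scoped Matrix
open Set Filter Topology

lemma key_est {n : ℕ} (L : Matrix (Fin n) (Fin n) ℝ)
    (hoff : ∀ i j, i ≠ j → 0 ≤ L i j) (hrow : ∀ i, ∑ j, L i j ≤ 0)
    (κ β : ℝ) (b : Fin n → ℝ) (hb : ‖b‖ ≤ κ * β)
    (v : Fin n → ℝ) (i : Fin n) (hi : ∀ j, |v j| ≤ |v i|) (σ : ℝ)
    (hσ1 : |σ| = 1) (hσ2 : σ * v i = |v i|) :
    σ * (((L - κ • (1 : Matrix (Fin n) (Fin n) ℝ)).mulVec v + b) i)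
      ≤ κ * β - κ * |v i| := by
  have hexp : ((L - κ • (1 : Matrix (Fin n) (Fin n) ℝ)).mulVec v + b) i
      = (∑ j, L i j * v j) - κ * v i + b i := by
    simp only [Pi.add_apply, Matrix.mulVec, Matrix.sub_apply, Matrix.smul_apply,
      Matrix.one_apply, dotProduct, smul_eq_mul, mul_ite, mul_one, mul_zero,
      sub_mul, ite_mul, zero_mul, Finset.sum_sub_distrib, Finset.sum_ite_eq,
      Finset.mem_univ, if_true]
  rw [hexp]
  have h1 : σ * ∑ j, L i j * v j ≤ 0 := by
    rw [Finset.mul_sum]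
    have : ∀ j ∈ Finset.univ, σ * (L i j * v j) ≤ L i j * |v i| := by
      intro j _
      rcases eq_or_ne j i with rfl | hj
      · rw [mul_left_comm, hσ2]
      · have h0 : 0 ≤ L i j := hoff i j (Ne.symm hj)
        have : σ * v j ≤ |v i| := by
          calc σ * v j ≤ |σ * v j| := le_abs_self _
          _ = |v j| := by rw [abs_mul, hσ1, one_mul]
          _ ≤ |v i| := hi j
        calc σ * (L i j * v j) = L i j * (σ * v j) := by ring
        _ ≤ L i j * |v i| := mul_le_mul_of_nonneg_left this h0
    calc ∑ j, σ * (L i j * v j) ≤ ∑ j, L i j * |v i| := Finset.sum_le_sum this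
    _ = (∑ j, L i j) * |v i| := by rw [Finset.sum_mul]
    _ ≤ 0 := mul_nonpos_of_nonpos_of_nonneg (hrow i) (abs_nonneg _)
  have h2 : σ * b i ≤ κ * β := by
    calc σ * b i ≤ |σ * b i| := le_abs_self _
    _ = |b i| := by rw [abs_mul, hσ1, one_mul]
    _ ≤ ‖b‖ := by rw [← Real.norm_eq_abs]; exact norm_le_pi_norm b i
    _ ≤ κ * β := hb
  calc σ * ((∑ j, L i j * v j) - κ * v i + b i)
      = σ * ∑ j, L i j * v j - κ * (σ * v i) + σ * b i := by ring
  _ ≤ 0 - κ * |v i| + κ * β := by rw [hσ2]; gcongr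
  _ = κ * β - κ * |v i| := by ring

/-- if w solves w' = L^κ w + b with L^κ = L - κI, L Metzler with
nonpositive row sums, κ > 0, ‖b‖_∞ ≤ κβ and ‖w(0)‖_∞ ≤ β, then ‖w(s)‖_∞ ≤ β for
all s ≥ 0. -/
theorem stmt_11 {n : ℕ} (L : Matrix (Fin n) (Fin n) ℝ)
    (hoff : ∀ i j, i ≠ j → 0 ≤ L i j)
    (hrow : ∀ i, ∑ j, L i j ≤ 0)
    (κ β : ℝ) (hκ : 0 < κ) (hβ : 0 < β)
    (b : Fin n → ℝ) (hb : ‖b‖ ≤ κ * β)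
    (w : ℝ → Fin n → ℝ)
    (hw : ∀ s : ℝ, 0 ≤ s →
      HasDerivAt w
        ((L - κ • (1 : Matrix (Fin n) (Fin n) ℝ)).mulVec (w s) + b) s)
    (hw0 : ‖w 0‖ ≤ β) :
    ∀ s : ℝ, 0 ≤ s → ‖w s‖ ≤ β := by
  intro s hs
  have main : ∀ ε : ℝ, 0 < ε → ‖w s‖ ≤ β + ε := by
    intro ε hε
    set A := L - κ • (1 : Matrix (Fin n) (Fin n) ℝ) with hA
    set f : ℝ → ℝ := fun t => ‖w t‖ with hfdef
    set f' : ℝ → ℝ := fun x =>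
      if ‖w x‖ = β + ε then -(κ * ε) else ‖A.mulVec (w x) + b‖ + 1 with hf'def
    have hcont : ContinuousOn f (Icc 0 s) := fun x hx =>
      ((hw x hx.1).continuousAt.norm).continuousWithinAt
    have hslope : ∀ x ∈ Ico (0:ℝ) s, ∀ r, f' x < r →
        ∃ᶠ z in 𝓝[>] x, slope f x z < r := by
      intro x hx r hr
      have hx0 : (0:ℝ) ≤ x := hx.1
      have hwx := hw x hx0
      have hmono : 𝓝[>] x ≤ 𝓝[≠] x :=
        nhdsWithin_mono x fun z hz => ne_of_gt hz
      by_cases htouch : ‖w x‖ = β + ε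
      · -- touching case
        simp only [hf'def] at hr; rw [if_pos htouch] at hr
        have hpos : 0 < ‖w x‖ := by rw [htouch]; positivity
        -- a maximizing coordinate exists
        have hne : Nonempty (Fin n) := by
          rcases Nat.eq_zero_or_pos n with h0 | h0
          · exfalso
            subst h0
            have : w x = 0 := Subsingleton.elim _ _
            rw [this, norm_zero] at hpos; exact lt_irrefl _ hpos
          · exact Fin.pos_iff_nonempty.1 h0
        -- pieces of the eventual estimate, coordinatewise
        have Ej : ∀ j : Fin n, ∀ᶠ z in 𝓝[>] x, |w z j| < ‖w x‖ + r * (z - x) := by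
          intro j
          rcases lt_or_eq_of_le
              ((norm_le_pi_norm (w x) j).trans_eq rfl :
                ‖w x j‖ ≤ ‖w x‖) with hj | hj
          · -- strictly smaller coordinate: continuity suffices
            rw [Real.norm_eq_abs] at hj
            have hcj : Tendsto (fun z => |w z j| - r * (z - x)) (𝓝 x) (𝓝 (|w x j|)) := by
              have h1 : Tendsto (fun z => |w z j|) (𝓝 x) (𝓝 (|w x j|)) :=
                ((hasDerivAt_pi.1 hwx j).continuousAt).abs
              have h2 : Tendsto (fun z : ℝ => r * (z - x)) (𝓝 x) (𝓝 0) := by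
                have h3 : Tendsto (fun z : ℝ => z - x) (𝓝 x) (𝓝 (x - x)) :=
                  tendsto_id.sub tendsto_const_nhds
                rw [sub_self] at h3
                simpa using h3.const_mul r
              simpa using h1.sub h2
            have := (hcj.eventually_lt_const hj).filter_mono
              (nhdsWithin_le_nhds : 𝓝[>] x ≤ 𝓝 x)
            filter_upwards [this] with z hz
            linarith
          · -- maximizing coordinate: use the Metzler estimate
            rw [Real.norm_eq_abs] at hj
            have hwj : HasDerivAt (fun t => w t j) ((A.mulVec (w x) + b) j) x :=
              hasDerivAt_pi.1 hwx j
            have habsj : |w x j| = ‖w x‖ := hj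
            have hwxj_ne : w x j ≠ 0 := by
              intro h0
              rw [h0, abs_zero] at habsj
              exact hpos.ne habsj
            set σ : ℝ := if 0 ≤ w x j then 1 else -1 with hσdef
            have hσ1 : |σ| = 1 := by rw [hσdef]; split_ifs <;> simp
            have hσ2 : σ * w x j = |w x j| := by
              rw [hσdef]; split_ifs with h
              · rw [one_mul, abs_of_nonneg h]
              · rw [abs_of_neg (lt_of_not_ge h)]; ring
            have hmaxj : ∀ k, |w x k| ≤ |w x j| := by
              intro k
              rw [habsj, ← Real.norm_eq_abs]
              exact norm_le_pi_norm (w x) k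
            have hkey : σ * ((A.mulVec (w x) + b) j) ≤ -(κ * ε) := by
              have := key_est L hoff hrow κ β b hb (w x) j hmaxj σ hσ1 hσ2
              rw [habsj, htouch] at this
              calc σ * ((A.mulVec (w x) + b) j) ≤ κ * β - κ * (β + ε) := this
              _ = -(κ * ε) := by ring
            have hlt : σ * ((A.mulVec (w x) + b) j) < r := lt_of_le_of_lt hkey hr
            have hg : HasDerivAt (fun t => σ * w t j) (σ * ((A.mulVec (w x) + b) j)) x :=
              hwj.const_mul σ
            have hslopeg : Tendsto (slope (fun t => σ * w t j) x) (𝓝[≠] x)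
                (𝓝 (σ * ((A.mulVec (w x) + b) j))) := hasDerivAt_iff_tendsto_slope.1 hg
            have h1 : ∀ᶠ z in 𝓝[>] x, slope (fun t => σ * w t j) x z < r :=
              (hslopeg.eventually_lt_const hlt).filter_mono hmono
            -- sign persistence
            have hσpos : 0 < σ * w x j := by rw [hσ2]; exact abs_pos.2 hwxj_ne
            have hcσ : Tendsto (fun z => σ * w z j) (𝓝 x) (𝓝 (σ * w x j)) :=
              (hwj.continuousAt).const_mul σ
            have h2 : ∀ᶠ z in 𝓝[>] x, 0 < σ * w z j :=
              (hcσ.eventually_const_lt hσpos).filter_mono nhdsWithin_le_nhds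
            filter_upwards [h1, h2, eventually_mem_nhdsWithin] with z hz1 hz2 hz3
            have hzx : 0 < z - x := sub_pos.2 hz3
            have habsz : |w z j| = σ * w z j := by
              have : |σ * w z j| = σ * w z j := abs_of_pos hz2
              rwa [abs_mul, hσ1, one_mul] at this
            rw [slope_def_field, div_lt_iff₀ hzx] at hz1
            rw [habsz, ← habsj]
            calc σ * w z j < σ * w x j + r * (z - x) := by linarith
            _ = |w x j| + r * (z - x) := by rw [hσ2]
        have E0 : ∀ᶠ z in 𝓝[>] x, 0 < ‖w x‖ + r * (z - x) := by
          have hc : Tendsto (fun z => ‖w x‖ + r * (z - x)) (𝓝 x) (𝓝 (‖w x‖)) := by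
            have h2 : Tendsto (fun z : ℝ => r * (z - x)) (𝓝 x) (𝓝 0) := by
              have h3 : Tendsto (fun z : ℝ => z - x) (𝓝 x) (𝓝 (x - x)) :=
                tendsto_id.sub tendsto_const_nhds
              rw [sub_self] at h3
              simpa using h3.const_mul r
            simpa using (tendsto_const_nhds.add h2)
          exact (hc.eventually_const_lt hpos).filter_mono nhdsWithin_le_nhds
        apply Filter.Eventually.frequently
        filter_upwards [eventually_all.2 Ej, E0, eventually_mem_nhdsWithin]
          with z hz1 hz2 hz3
        have hzx : 0 < z - x := sub_pos.2 hz3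
        have hfz : f z < ‖w x‖ + r * (z - x) := by
          rw [hfdef]
          rw [pi_norm_lt_iff hz2]
          intro j
          rw [Real.norm_eq_abs]
          exact hz1 j
        rw [slope_def_field, div_lt_iff₀ hzx]
        have : f x = ‖w x‖ := rfl
        linarith
      · -- non-touching case: crude bound by the norm of the derivative
        simp only [hf'def] at hr; rw [if_neg htouch] at hr
        have hslopew : Tendsto (fun z => ‖slope w x z‖) (𝓝[≠] x)
            (𝓝 ‖A.mulVec (w x) + b‖) :=
          (hasDerivAt_iff_tendsto_slope.1 hwx).norm
        have hlt : ‖A.mulVec (w x) + b‖ < r := by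
          have : (0:ℝ) ≤ 1 := zero_le_one
          linarith
        have h1 : ∀ᶠ z in 𝓝[>] x, ‖slope w x z‖ < r :=
          (hslopew.eventually_lt_const hlt).filter_mono hmono
        apply Filter.Eventually.frequently
        filter_upwards [h1, eventually_mem_nhdsWithin] with z hz1 hz3
        have hzx : 0 < z - x := sub_pos.2 hz3
        have hbnd : slope f x z ≤ ‖slope w x z‖ := by
          rw [slope_def_field]
          have h4 : ‖slope w x z‖ = ‖w z - w x‖ / (z - x) := by
            rw [slope]
            rw [norm_smul]
            rw [div_eq_inv_mul]
            congr 1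
            rw [norm_inv, Real.norm_eq_abs, abs_of_pos hzx]
          rw [h4]
          apply div_le_div_of_nonneg_right ?_ hzx.le |>.trans_eq rfl
          calc f z - f x ≤ |f z - f x| := le_abs_self _
          _ ≤ ‖w z - w x‖ := abs_norm_sub_norm_le _ _
        exact lt_of_le_of_lt hbnd hz1
    have := image_le_of_liminf_slope_right_lt_deriv_boundary (f := f) (f' := f')
      (a := 0) (b := s) (B := fun _ => β + ε) (B' := fun _ => 0) hcont hslope
      (by simpa [hfdef] using le_trans hw0 (by linarith))
      (fun x => hasDerivAt_const x _)
      (by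
        intro x hx hfx
        have hfx' : ‖w x‖ = β + ε := hfx
        show (if ‖w x‖ = β + ε then -(κ * ε) else ‖A.mulVec (w x) + b‖ + 1) < 0
        rw [if_pos hfx']
        nlinarith)
    exact this ⟨hs, le_refl s⟩
  by_contra hcon
  push_neg at hcon
  obtain ⟨ε, hε1, hε2⟩ : ∃ ε : ℝ, 0 < ε ∧ β + ε < ‖w s‖ :=
    ⟨(‖w s‖ - β) / 2, by linarith, by linarith⟩
  exact absurd (main ε hε1) (not_le.2 hε2)
end

section
/- Let L^κ be as above, and let b(s) = (1 - s/τ) b₀ + (s/τ) b₁ be a linear-in-time interpolation with ‖b₀‖_∞ ≤ κβ and ‖b₁‖_∞ ≤ κβ. If w solves w'(s) = L^κ w(s) + b(s) with ‖w(0)‖_∞ ≤ β, then ‖w(τ)‖_∞ ≤ β. -/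
/-!
For small `h > 0` the matrix `1 + h • (L - κ • 1)` is entrywise nonnegative with row sums at most
`1 - h κ`, so `‖v + h • (L - κ • 1) *ᵥ v‖ ≤ (1 - h κ) ‖v‖` in the sup norm. Together with
`‖b(s)‖ ≤ κ β` this bounds the right Dini derivative of `s ↦ ‖w s‖` by `κ β - κ ‖w s‖`, and Gronwall's
comparison with the constant solution `β` of `y' = -κ y + κ β` gives `‖w τ‖ ≤ β`.
-/

open scoped Matrix Topology
open Filter Set

theorem norm_mulVec_le_of_nonneg {m n : Type*} [Fintype m] [Fintype n] {A : Matrix m n ℝ}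
    {c : ℝ} (hA : ∀ i j, 0 ≤ A i j) (hrow : ∀ i, ∑ j, A i j ≤ c) (hc : 0 ≤ c) (v : n → ℝ) :
    ‖A *ᵥ v‖ ≤ c * ‖v‖ := by
  refine (pi_norm_le_iff_of_nonneg (by positivity)).2 fun i => ?_
  calc ‖(A *ᵥ v) i‖ ≤ ∑ j, ‖A i j * v j‖ := norm_sum_le _ _
    _ ≤ ∑ j, A i j * ‖v‖ := Finset.sum_le_sum fun j _ => by
        rw [norm_mul, Real.norm_of_nonneg (hA i j)]
        exact mul_le_mul_of_nonneg_left (norm_le_pi_norm v j) (hA i j)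
    _ = (∑ j, A i j) * ‖v‖ := (Finset.sum_mul _ _ _).symm
    _ ≤ c * ‖v‖ := mul_le_mul_of_nonneg_right (hrow i) (norm_nonneg v)

theorem eventually_mul_le_one (c : ℝ) : ∀ᶠ h in 𝓝[>] (0 : ℝ), h * c ≤ 1 := by
  have : Tendsto (· * c) (𝓝 (0 : ℝ)) (𝓝 0) := (continuous_mul_const c).tendsto' 0 0 (zero_mul c)
  exact nhdsWithin_le_nhds (this.eventually (eventually_le_nhds zero_lt_one))

theorem tendsto_sub_nhdsGT (x : ℝ) : Tendsto (· - x) (𝓝[>] x) (𝓝[>] 0) := by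
  refine tendsto_nhdsWithin_of_tendsto_nhds_of_eventually_within _ ?_ ?_
  · exact ((continuous_sub_right x).tendsto' x 0 (sub_self x)).mono_left nhdsWithin_le_nhds
  · filter_upwards [self_mem_nhdsWithin] with z (hz : x < z) using sub_pos.2 hz

theorem eventually_norm_add_smul_mulVec_le {ι : Type*} [Fintype ι] [DecidableEq ι]
    (L : Matrix ι ι ℝ) (hoff : ∀ i j, i ≠ j → 0 ≤ L i j) (hrow : ∀ i, ∑ j, L i j ≤ 0) (κ : ℝ) :
    ∀ᶠ h in 𝓝[>] (0 : ℝ), ∀ v : ι → ℝ,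
      ‖v + h • (L - κ • (1 : Matrix ι ι ℝ)) *ᵥ v‖ ≤ (1 - h * κ) * ‖v‖ := by
  filter_upwards [self_mem_nhdsWithin, eventually_mul_le_one κ,
    eventually_all.2 fun i => eventually_mul_le_one (κ - L i i)] with h (hh : 0 < h) hκ hdiag v
  set A := 1 + h • (L - κ • (1 : Matrix ι ι ℝ))
  have hA : ∀ i j, A i j = (if i = j then 1 - h * κ else 0) + h * L i j := by
    intro i j
    by_cases hij : i = j
    · simp only [A, hij, Matrix.add_apply, Matrix.one_apply_eq, Matrix.smul_apply,
        Matrix.sub_apply, smul_eq_mul, mul_one, if_true]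
      ring
    · simp [A, hij]
  have hAnonneg : ∀ i j, 0 ≤ A i j := by
    intro i j
    rw [hA]
    by_cases hij : i = j
    · subst hij; simp only [if_true]; nlinarith [hdiag i]
    · simpa [hij] using mul_nonneg hh.le (hoff i j hij)
  have hArow : ∀ i, ∑ j, A i j ≤ 1 - h * κ := by
    intro i
    simp only [hA, Finset.sum_add_distrib, Finset.sum_ite_eq, Finset.mem_univ, if_true,
      ← Finset.mul_sum]
    nlinarith [hrow i]
  have hAv : v + h • (L - κ • (1 : Matrix ι ι ℝ)) *ᵥ v = A *ᵥ v := by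
    simp [A, Matrix.add_mulVec, Matrix.smul_mulVec]
  rw [hAv]
  exact norm_mulVec_le_of_nonneg hAnonneg hArow (by linarith) v

theorem eventually_slope_norm_lt {E : Type*} [NormedAddCommGroup E] [NormedSpace ℝ E]
    {w : ℝ → E} {w' : E} {x m r : ℝ} (hw : HasDerivWithinAt w w' (Ioi x) x)
    (hstep : ∀ᶠ h in 𝓝[>] 0, ‖w x + h • w'‖ ≤ ‖w x‖ + h * m) (hr : m < r) :
    ∀ᶠ z in 𝓝[>] x, (z - x)⁻¹ * (‖w z‖ - ‖w x‖) < r := by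
  have hslope : ∀ᶠ z in 𝓝[>] x, ‖slope w x z - w'‖ < r - m := by
    have := (hasDerivWithinAt_iff_tendsto_slope' (lt_irrefl x : x ∉ Ioi x)).1 hw
    filter_upwards [this.eventually (Metric.ball_mem_nhds w' (sub_pos.2 hr))] with z hz
    rwa [← dist_eq_norm]
  filter_upwards [(tendsto_sub_nhdsGT x).eventually hstep, hslope, self_mem_nhdsWithin]
    with z hz hzs (hxz : x < z)
  have hh : 0 < z - x := sub_pos.2 hxz
  have hwz : w z = (w x + (z - x) • w') + (z - x) • (slope w x z - w') := by
    rw [smul_sub, sub_smul_slope, vsub_eq_sub]; abel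
  rw [inv_mul_lt_iff₀ hh]
  calc ‖w z‖ - ‖w x‖ ≤ (z - x) * m + (z - x) * ‖slope w x z - w'‖ := by
        have := norm_add_le (w x + (z - x) • w') ((z - x) • (slope w x z - w'))
        rw [← hwz, norm_smul, Real.norm_of_nonneg hh.le] at this
        linarith
    _ < (z - x) * m + (z - x) * (r - m) := by gcongr
    _ = (z - x) * r := by ring

theorem gronwallBound_neg_mul_eq (δ K x : ℝ) : gronwallBound δ (-K) (K * δ) x = δ := by
  rcases eq_or_ne K 0 with rfl | hK
  · simp [gronwallBound_K0]
  · rw [gronwallBound_of_K_ne_0 (neg_ne_zero.2 hK)]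
    field_simp
    ring

theorem norm_one_sub_smul_add_smul_le {E : Type*} [SeminormedAddCommGroup E] [NormedSpace ℝ E] {b₀ b₁ : E}
    {M t : ℝ} (hb₀ : ‖b₀‖ ≤ M) (hb₁ : ‖b₁‖ ≤ M) (ht : t ∈ Icc (0 : ℝ) 1) :
    ‖(1 - t) • b₀ + t • b₁‖ ≤ M := by
  have := convex_closedBall (0 : E) M (mem_closedBall_zero_iff.2 hb₀)
    (mem_closedBall_zero_iff.2 hb₁) (sub_nonneg.2 ht.2) ht.1 (sub_add_cancel 1 t)
  exact mem_closedBall_zero_iff.1 this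

theorem eventually_norm_add_smul_mulVec_add_le {ι : Type*} [Fintype ι] [DecidableEq ι]
    (L : Matrix ι ι ℝ) (hoff : ∀ i j, i ≠ j → 0 ≤ L i j) (hrow : ∀ i, ∑ j, L i j ≤ 0) (κ : ℝ)
    {M : ℝ} (v d : ι → ℝ) (hd : ‖d‖ ≤ M) :
    ∀ᶠ h in 𝓝[>] (0 : ℝ),
      ‖v + h • ((L - κ • (1 : Matrix ι ι ℝ)) *ᵥ v + d)‖ ≤ ‖v‖ + h * (M - κ * ‖v‖) := by
  filter_upwards [eventually_norm_add_smul_mulVec_le L hoff hrow κ, self_mem_nhdsWithin]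
    with h hL (hh : 0 < h)
  calc ‖v + h • ((L - κ • (1 : Matrix ι ι ℝ)) *ᵥ v + d)‖
      = ‖(v + h • (L - κ • (1 : Matrix ι ι ℝ)) *ᵥ v) + h • d‖ := by
        rw [smul_add, add_assoc]
    _ ≤ (1 - h * κ) * ‖v‖ + h * M := by
        refine norm_add_le_of_le (hL v) ?_
        rw [norm_smul, Real.norm_of_nonneg hh.le]
        gcongr
    _ = ‖v‖ + h * (M - κ * ‖v‖) := by ring

theorem stmt_12_general {n : ℕ} (L : Matrix (Fin n) (Fin n) ℝ)
    (hoff : ∀ i j, i ≠ j → 0 ≤ L i j)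
    (hrow : ∀ i, ∑ j, L i j ≤ 0)
    (κ β τ : ℝ) (hτ : 0 < τ)
    (b₀ b₁ : Fin n → ℝ) (hb₀ : ‖b₀‖ ≤ κ * β) (hb₁ : ‖b₁‖ ≤ κ * β)
    (w : ℝ → Fin n → ℝ)
    (hw : ∀ s ∈ Set.Icc (0 : ℝ) τ,
      HasDerivAt w
        ((L - κ • (1 : Matrix (Fin n) (Fin n) ℝ)).mulVec (w s)
          + ((1 - s / τ) • b₀ + (s / τ) • b₁)) s)
    (hw0 : ‖w 0‖ ≤ β) :
    ‖w τ‖ ≤ β := by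
  have hforce : ∀ s ∈ Icc 0 τ, ‖(1 - s / τ) • b₀ + (s / τ) • b₁‖ ≤ κ * β := fun s hs =>
    norm_one_sub_smul_add_smul_le hb₀ hb₁ ⟨div_nonneg hs.1 hτ.le, div_le_one_of_le₀ hs.2 hτ.le⟩
  have hdini : ∀ s ∈ Ico 0 τ, ∀ r, κ * β - κ * ‖w s‖ < r →
      ∃ᶠ z in 𝓝[>] s, (z - s)⁻¹ * (‖w z‖ - ‖w s‖) < r := fun s hs _ hr =>
    (eventually_slope_norm_lt (hw s (Ico_subset_Icc_self hs)).hasDerivWithinAt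
      (eventually_norm_add_smul_mulVec_add_le L hoff hrow κ _ _ (hforce s
        (Ico_subset_Icc_self hs))) hr).frequently
  have := le_gronwallBound_of_liminf_deriv_right_le
    (fun s hs => (hw s hs).continuousAt.norm.continuousWithinAt) hdini hw0
    (fun s _ => (by ring : κ * β - κ * ‖w s‖ = -κ * ‖w s‖ + κ * β).le) τ ⟨hτ.le, le_rfl⟩
  rwa [gronwallBound_neg_mul_eq] at this

/-- if w solves w' = L^κ w + b(s) on [0,τ] with
b(s) = (1 - s/τ)b₀ + (s/τ)b₁, ‖b₀‖_∞ ≤ κβ, ‖b₁‖_∞ ≤ κβ, and ‖w(0)‖_∞ ≤ β, then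
‖w(τ)‖_∞ ≤ β. -/
theorem stmt_12 {n : ℕ} (L : Matrix (Fin n) (Fin n) ℝ)
    (hoff : ∀ i j, i ≠ j → 0 ≤ L i j)
    (hrow : ∀ i, ∑ j, L i j ≤ 0)
    (κ β τ : ℝ) (hκ : 0 < κ) (hβ : 0 < β) (hτ : 0 < τ)
    (b₀ b₁ : Fin n → ℝ) (hb₀ : ‖b₀‖ ≤ κ * β) (hb₁ : ‖b₁‖ ≤ κ * β)
    (w : ℝ → Fin n → ℝ)
    (hw : ∀ s ∈ Set.Icc (0 : ℝ) τ,
      HasDerivAt w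
        ((L - κ • (1 : Matrix (Fin n) (Fin n) ℝ)).mulVec (w s)
          + ((1 - s / τ) • b₀ + (s / τ) • b₁)) s)
    (hw0 : ‖w 0‖ ≤ β) :
    ‖w τ‖ ≤ β :=
  stmt_12_general L hoff hrow κ β τ hτ b₀ b₁ hb₀ hb₁ w hw hw0
end

section
/- Let L be an n×n Metzler matrix with nonpositive row sums, κ > 0, L^κ = L - κI, and let N be applied entrywise with |N(ξ)| ≤ κβ on [-β,β]. Suppose ‖Uⁿ‖_∞ ≤ β and ‖Ûⁿ⁺¹‖_∞ ≤ β. Then the ETDRK2 update Uⁿ⁺¹ = e^{τL^κ}Uⁿ + τφ₁(τL^κ)N(Uⁿ) + τφ₂(τL^κ)(N(Ûⁿ⁺¹) - N(Uⁿ)) satisfies ‖Uⁿ⁺¹‖_∞ ≤ β for every τ > 0. -/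
open scoped Matrix

open NormedSpace

namespace Stmt19Aux

variable {n : ℕ}

/-- Global entrywise bound constant. -/
noncomputable def abnd (M : Matrix (Fin n) (Fin n) ℝ) : ℝ := ∑ p, ∑ q, |M p q|

lemma abnd_nonneg (M : Matrix (Fin n) (Fin n) ℝ) : 0 ≤ abnd M :=
  Finset.sum_nonneg fun _ _ => Finset.sum_nonneg fun _ _ => abs_nonneg _

lemma rowabs_le (M : Matrix (Fin n) (Fin n) ℝ) (i : Fin n) : ∑ q, |M i q| ≤ abnd M :=
  Finset.single_le_sum (f := fun p => ∑ q, |M p q|)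
    (fun _ _ => Finset.sum_nonneg fun _ _ => abs_nonneg _) (Finset.mem_univ i)

lemma colabs_le (M : Matrix (Fin n) (Fin n) ℝ) (j : Fin n) : ∑ p, |M p j| ≤ abnd M := by
  rw [ abnd, Finset.sum_comm]
  exact Finset.single_le_sum (f := fun q => ∑ p, |M p q|)
    (fun _ _ => Finset.sum_nonneg fun _ _ => abs_nonneg _) (Finset.mem_univ j)

lemma pow_entry_abs_le (M : Matrix (Fin n) (Fin n) ℝ) (k : ℕ) (i j : Fin n) :
    |(M ^ k) i j| ≤ (abnd M) ^ k := by
  induction k generalizing i j with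
  | zero =>
    simp only [pow_zero, Matrix.one_apply]
    split <;> simp
  | succ k ih =>
    rw [pow_succ, Matrix.mul_apply]
    calc |∑ l, (M ^ k) i l * M l j| ≤ ∑ l, |(M ^ k) i l * M l j| :=
          Finset.abs_sum_le_sum_abs _ _
      _ ≤ ∑ l, (abnd M) ^ k * |M l j| := by
          refine Finset.sum_le_sum fun l _ => ?_
          rw [abs_mul]
          exact mul_le_mul_of_nonneg_right (ih i l) (abs_nonneg _)
      _ = (abnd M) ^ k * ∑ l, |M l j| := by rw [Finset.mul_sum]
      _ ≤ (abnd M) ^ k * abnd M :=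
          mul_le_mul_of_nonneg_left (colabs_le M j) (pow_nonneg (abnd_nonneg M) k)
      _ = (abnd M) ^ (k + 1) := (pow_succ _ _).symm

lemma summable_exp_entry (M : Matrix (Fin n) (Fin n) ℝ) (i j : Fin n) :
    Summable fun k : ℕ => ((k.factorial : ℝ))⁻¹ * (M ^ k) i j := by
  rw [← summable_abs_iff]
  refine Summable.of_nonneg_of_le (fun k => abs_nonneg _) (fun k => ?_)
    (Real.summable_pow_div_factorial (abnd M))
  rw [abs_mul, abs_inv, abs_of_nonneg (by positivity : (0:ℝ) ≤ (k.factorial : ℝ)), div_eq_inv_mul,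
    mul_comm ((k.factorial : ℝ))⁻¹ ((abnd M) ^ k)]
  rw [mul_comm ((k.factorial : ℝ))⁻¹ |(M ^ k) i j|]
  exact mul_le_mul_of_nonneg_right (pow_entry_abs_le M k i j) (by positivity)

lemma summable_exp_series (M : Matrix (Fin n) (Fin n) ℝ) :
    Summable fun k : ℕ => ((k.factorial : ℝ))⁻¹ • M ^ k := by
  refine Pi.summable.2 fun i => Pi.summable.2 fun j => ?_
  simpa [Matrix.smul_apply, smul_eq_mul] using summable_exp_entry M i j

lemma exp_entry (M : Matrix (Fin n) (Fin n) ℝ) (i j : Fin n) :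
    NormedSpace.exp M i j = ∑' k : ℕ, ((k.factorial : ℝ))⁻¹ * (M ^ k) i j := by
  rw [NormedSpace.exp_eq_tsum ℝ]
  show (∑' k : ℕ, ((k.factorial : ℝ))⁻¹ • M ^ k) i j = _
  erw [tsum_apply (summable_exp_series M), tsum_apply (Pi.summable.1 (summable_exp_series M) i)]
  simp [Matrix.smul_apply, smul_eq_mul]

lemma pow_entry_nonneg {M : Matrix (Fin n) (Fin n) ℝ} (hM : ∀ i j, 0 ≤ M i j) (k : ℕ) :
    ∀ i j, 0 ≤ (M ^ k) i j := by
  induction k with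
  | zero =>
    intro i j
    simp only [pow_zero, Matrix.one_apply]
    split <;> simp
  | succ k ih =>
    intro i j
    rw [pow_succ, Matrix.mul_apply]
    exact Finset.sum_nonneg fun l _ => mul_nonneg (ih i l) (hM l j)

lemma exp_entry_nonneg {M : Matrix (Fin n) (Fin n) ℝ} (hM : ∀ i j, 0 ≤ M i j) (i j : Fin n) :
    0 ≤ NormedSpace.exp M i j := by
  rw [exp_entry]
  exact tsum_nonneg fun k => mul_nonneg (by positivity) (pow_entry_nonneg hM k i j)

lemma pow_rowsum_le {M : Matrix (Fin n) (Fin n) ℝ} (hM : ∀ i j, 0 ≤ M i j) {c : ℝ}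
    (hc : 0 ≤ c) (hr : ∀ i, ∑ j, M i j ≤ c) (k : ℕ) (i : Fin n) :
    ∑ j, (M ^ k) i j ≤ c ^ k := by
  induction k generalizing i with
  | zero => simp [Matrix.one_apply, Finset.sum_ite_eq]
  | succ k ih =>
    have : ∑ j, (M ^ (k + 1)) i j = ∑ l, M i l * ∑ j, (M ^ k) l j := by
      simp only [pow_succ', Matrix.mul_apply]
      rw [Finset.sum_comm]
      simp [Finset.mul_sum]
    rw [this, pow_succ']
    calc ∑ l, M i l * ∑ j, (M ^ k) l j ≤ ∑ l, M i l * c ^ k := by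
          refine Finset.sum_le_sum fun l _ => ?_
          exact mul_le_mul_of_nonneg_left (ih l) (hM i l)
      _ = (∑ l, M i l) * c ^ k := (Finset.sum_mul _ _ _).symm
      _ ≤ c * c ^ k :=
          mul_le_mul_of_nonneg_right (hr i) (pow_nonneg hc k)

lemma exp_rowsum_le {M : Matrix (Fin n) (Fin n) ℝ} (hM : ∀ i j, 0 ≤ M i j) {c : ℝ}
    (hc : 0 ≤ c) (hr : ∀ i, ∑ j, M i j ≤ c) (i : Fin n) :
    ∑ j, NormedSpace.exp M i j ≤ Real.exp c := by
  have h1 : ∑ j, NormedSpace.exp M i j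
      = ∑' k : ℕ, ∑ j, ((k.factorial : ℝ))⁻¹ * (M ^ k) i j := by
    simp_rw [exp_entry]
    exact (Summable.tsum_finsetSum fun j _ => summable_exp_entry M i j).symm
  rw [h1]
  have h2 : Real.exp c = ∑' k : ℕ, c ^ k / (k.factorial : ℝ) := by
    rw [Real.exp_eq_exp_ℝ, NormedSpace.exp_eq_tsum_div]
  rw [h2]
  refine Summable.tsum_le_tsum (fun k => ?_)
    (summable_sum fun j _ => summable_exp_entry M i j)
    (Real.summable_pow_div_factorial c)
  rw [← Finset.mul_sum, div_eq_inv_mul]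
  exact mul_le_mul_of_nonneg_left (pow_rowsum_le hM hc hr k i) (by positivity)

lemma mulVec_norm_le {P : Matrix (Fin n) (Fin n) ℝ} (hP : ∀ i j, 0 ≤ P i j) {R : ℝ}
    (hR : 0 ≤ R) (hr : ∀ i, ∑ j, P i j ≤ R) (v : Fin n → ℝ) :
    ‖P.mulVec v‖ ≤ R * ‖v‖ := by
  rw [pi_norm_le_iff_of_nonneg (mul_nonneg hR (norm_nonneg v))]
  intro i
  rw [Real.norm_eq_abs]
  have : P.mulVec v i = ∑ j, P i j * v j := by
    simp [Matrix.mulVec, dotProduct]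
  rw [this]
  calc |∑ j, P i j * v j| ≤ ∑ j, |P i j * v j| := Finset.abs_sum_le_sum_abs _ _
    _ ≤ ∑ j, P i j * ‖v‖ := by
        refine Finset.sum_le_sum fun j _ => ?_
        rw [abs_mul, abs_of_nonneg (hP i j)]
        exact mul_le_mul_of_nonneg_left
          (by simpa [Real.norm_eq_abs] using norm_le_pi_norm v j) (hP i j)
    _ = (∑ j, P i j) * ‖v‖ := (Finset.sum_mul _ _ _).symm
    _ ≤ R * ‖v‖ := mul_le_mul_of_nonneg_right (hr i) (norm_nonneg v)

lemma exp_smul_one (r : ℝ) :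
    NormedSpace.exp (r • (1 : Matrix (Fin n) (Fin n) ℝ))
      = Real.exp r • (1 : Matrix (Fin n) (Fin n) ℝ) := by
  rw [Matrix.smul_one_eq_diagonal, Matrix.exp_diagonal, Matrix.smul_one_eq_diagonal]
  congr 1
  rw [Pi.exp_def]
  funext i
  rw [← Real.exp_eq_exp_ℝ]

/-- Key contraction estimate. -/
lemma key (L : Matrix (Fin n) (Fin n) ℝ)
    (hoff : ∀ i j, i ≠ j → 0 ≤ L i j)
    (hrow : ∀ i, ∑ j, L i j ≤ 0)
    {κ : ℝ} (hκ : 0 < κ) {t : ℝ} (ht : 0 ≤ t) (v : Fin n → ℝ) :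
    ‖(NormedSpace.exp (t • (L - κ • (1 : Matrix (Fin n) (Fin n) ℝ)))).mulVec v‖
      ≤ Real.exp (-(κ * t)) * ‖v‖ := by
  classical
  set c : ℝ := ∑ p, |L p p| with hc_def
  have hc : 0 ≤ c := Finset.sum_nonneg fun _ _ => abs_nonneg _
  set M : Matrix (Fin n) (Fin n) ℝ := L + c • (1 : Matrix (Fin n) (Fin n) ℝ) with hM_def
  have habs : ∀ i, |L i i| ≤ c := fun i =>
    Finset.single_le_sum (f := fun p => |L p p|) (fun _ _ => abs_nonneg _) (Finset.mem_univ i)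
  have hMpos : ∀ i j, 0 ≤ M i j := by
    intro i j
    by_cases h : i = j
    · subst h
      simp only [hM_def, Matrix.add_apply, Matrix.smul_apply, Matrix.one_apply_eq,
        smul_eq_mul, mul_one]
      have := habs i
      have := neg_abs_le (L i i)
      linarith
    · simp only [hM_def, Matrix.add_apply, Matrix.smul_apply, Matrix.one_apply_ne h,
        smul_eq_mul, mul_zero, add_zero]
      exact hoff i j h
  have hsum_one : ∀ i : Fin n, ∑ j, (1 : Matrix (Fin n) (Fin n) ℝ) i j = 1 := by
    intro i
    simp [Matrix.one_apply]
  have hMrow : ∀ i, ∑ j, M i j ≤ c := by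
    intro i
    simp only [hM_def, Matrix.add_apply, Matrix.smul_apply, smul_eq_mul]
    rw [Finset.sum_add_distrib, ← Finset.mul_sum, hsum_one i, mul_one]
    have := hrow i
    linarith
  -- entries and row sums of t • M
  have htMpos : ∀ i j, 0 ≤ (t • M) i j := fun i j => by
    simpa [Matrix.smul_apply, smul_eq_mul] using mul_nonneg ht (hMpos i j)
  have htMrow : ∀ i, ∑ j, (t • M) i j ≤ t * c := by
    intro i
    simp only [Matrix.smul_apply, smul_eq_mul]
    rw [← Finset.mul_sum]
    exact mul_le_mul_of_nonneg_left (hMrow i) ht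
  -- decomposition
  have hdec : t • (L - κ • (1 : Matrix (Fin n) (Fin n) ℝ))
      = t • M + (-(t * (c + κ))) • (1 : Matrix (Fin n) (Fin n) ℝ) := by
    rw [hM_def]
    module
  have hcomm : Commute (t • M) ((-(t * (c + κ))) • (1 : Matrix (Fin n) (Fin n) ℝ)) :=
    (Commute.one_right (t • M)).smul_right _
  have hexp : NormedSpace.exp (t • (L - κ • (1 : Matrix (Fin n) (Fin n) ℝ)))
      = Real.exp (-(t * (c + κ))) • NormedSpace.exp (t • M) := by
    rw [hdec, Matrix.exp_add_of_commute _ _ hcomm, exp_smul_one, mul_smul_comm, mul_one]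
  rw [hexp, Matrix.smul_mulVec, norm_smul, Real.norm_eq_abs,
    abs_of_pos (Real.exp_pos _)]
  have hbound : ‖(NormedSpace.exp (t • M)).mulVec v‖ ≤ Real.exp (t * c) * ‖v‖ :=
    mulVec_norm_le (exp_entry_nonneg htMpos) (Real.exp_pos _).le
      (exp_rowsum_le htMpos (mul_nonneg ht hc) htMrow) v
  calc Real.exp (-(t * (c + κ))) * ‖(NormedSpace.exp (t • M)).mulVec v‖
      ≤ Real.exp (-(t * (c + κ))) * (Real.exp (t * c) * ‖v‖) :=
        mul_le_mul_of_nonneg_left hbound (Real.exp_pos _).le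
    _ = Real.exp (-(κ * t)) * ‖v‖ := by
        rw [← mul_assoc, ← Real.exp_add]
        ring_nf

end Stmt19Aux

/-- discrete MBP of the fully discrete ETDRK2 scheme. With L^κ = L - κI
(L Metzler with nonpositive row sums), |N| ≤ κβ on [-β,β], ‖Uⁿ‖_∞ ≤ β and
‖Ûⁿ⁺¹‖_∞ ≤ β, the ETDRK2 update, written in its exact Duhamel form
Uⁿ⁺¹ = e^{τL^κ}Uⁿ + ∫₀^τ e^{(τ-s)L^κ}((1-s/τ)N(Uⁿ) + (s/τ)N(Ûⁿ⁺¹)) ds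
(equal to e^{τL^κ}Uⁿ + τφ₁(τL^κ)N(Uⁿ) + τφ₂(τL^κ)(N(Ûⁿ⁺¹) - N(Uⁿ))),
satisfies ‖Uⁿ⁺¹‖_∞ ≤ β for every τ > 0. -/
theorem stmt_19 {n : ℕ} (L : Matrix (Fin n) (Fin n) ℝ)
    (hoff : ∀ i j, i ≠ j → 0 ≤ L i j)
    (hrow : ∀ i, ∑ j, L i j ≤ 0)
    (κ β τ : ℝ) (hκ : 0 < κ) (hβ : 0 < β) (hτ : 0 < τ)
    (N : ℝ → ℝ) (hN : ∀ ξ : ℝ, |ξ| ≤ β → |N ξ| ≤ κ * β)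
    (Un Uhat : Fin n → ℝ) (hUn : ‖Un‖ ≤ β) (hUhat : ‖Uhat‖ ≤ β) :
    ‖(NormedSpace.exp (τ • (L - κ • (1 : Matrix (Fin n) (Fin n) ℝ)))).mulVec Un
        + ∫ s in (0 : ℝ)..τ,
            (NormedSpace.exp ((τ - s) • (L - κ • (1 : Matrix (Fin n) (Fin n) ℝ)))).mulVec
              ((1 - s / τ) • (fun i => N (Un i)) + (s / τ) • (fun i => N (Uhat i)))‖
      ≤ β := by
  have hκβ : 0 ≤ κ * β := (mul_pos hκ hβ).le
  -- bound for the nonlinear terms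
  have hNUn : ‖(fun i => N (Un i))‖ ≤ κ * β := by
    rw [pi_norm_le_iff_of_nonneg hκβ]
    intro i
    rw [Real.norm_eq_abs]
    exact hN _ (le_trans (by simpa [Real.norm_eq_abs] using norm_le_pi_norm Un i) hUn)
  have hNUhat : ‖(fun i => N (Uhat i))‖ ≤ κ * β := by
    rw [pi_norm_le_iff_of_nonneg hκβ]
    intro i
    rw [Real.norm_eq_abs]
    exact hN _ (le_trans (by simpa [Real.norm_eq_abs] using norm_le_pi_norm Uhat i) hUhat)
  -- first term
  have h1 : ‖(NormedSpace.exp (τ • (L - κ • (1 : Matrix (Fin n) (Fin n) ℝ)))).mulVec Un‖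
      ≤ Real.exp (-(κ * τ)) * β := by
    refine le_trans (Stmt19Aux.key L hoff hrow hκ hτ.le Un) ?_
    exact mul_le_mul_of_nonneg_left hUn (Real.exp_pos _).le
  -- integrand bound
  set g : ℝ → ℝ := fun s => Real.exp (-(κ * (τ - s))) * (κ * β) with hg_def
  have hgint : IntervalIntegrable g MeasureTheory.volume 0 τ := by
    apply Continuous.intervalIntegrable
    fun_prop
  have hpt : ∀ s ∈ Set.uIoc (0 : ℝ) τ,
      ‖(NormedSpace.exp ((τ - s) • (L - κ • (1 : Matrix (Fin n) (Fin n) ℝ)))).mulVec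
        ((1 - s / τ) • (fun i => N (Un i)) + (s / τ) • (fun i => N (Uhat i)))‖ ≤ g s := by
    intro s hs
    rw [Set.uIoc_of_le hτ.le] at hs
    obtain ⟨hs0, hsτ⟩ := hs
    have hsτ' : s / τ ≤ 1 := (div_le_one hτ).2 hsτ
    have hs0' : 0 ≤ s / τ := div_nonneg hs0.le hτ.le
    have hw : ‖(1 - s / τ) • (fun i => N (Un i)) + (s / τ) • (fun i => N (Uhat i))‖ ≤ κ * β := by
      refine le_trans (norm_add_le _ _) ?_
      rw [norm_smul, norm_smul, Real.norm_eq_abs, Real.norm_eq_abs,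
        abs_of_nonneg (by linarith), abs_of_nonneg hs0']
      calc (1 - s / τ) * ‖(fun i => N (Un i))‖ + s / τ * ‖(fun i => N (Uhat i))‖
          ≤ (1 - s / τ) * (κ * β) + s / τ * (κ * β) := by
            exact add_le_add (mul_le_mul_of_nonneg_left hNUn (by linarith))
              (mul_le_mul_of_nonneg_left hNUhat hs0')
        _ = κ * β := by ring
    refine le_trans (Stmt19Aux.key L hoff hrow hκ (by linarith) _) ?_
    exact mul_le_mul_of_nonneg_left hw (Real.exp_pos _).le
  -- bound the integral
  have h2 : ‖∫ s in (0 : ℝ)..τ,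
      (NormedSpace.exp ((τ - s) • (L - κ • (1 : Matrix (Fin n) (Fin n) ℝ)))).mulVec
        ((1 - s / τ) • (fun i => N (Un i)) + (s / τ) • (fun i => N (Uhat i)))‖
      ≤ |∫ s in (0 : ℝ)..τ, g s| := by
    refine intervalIntegral.norm_integral_le_abs_of_norm_le ?_ hgint
    filter_upwards [MeasureTheory.ae_restrict_mem measurableSet_uIoc] with s hs
    exact hpt s hs
  -- compute the integral of g
  have hgval : (∫ s in (0 : ℝ)..τ, g s) = β * (1 - Real.exp (-(κ * τ))) := by
    have e1 : (∫ s in (0 : ℝ)..τ, Real.exp (-(κ * (τ - s))))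
        = ∫ u in (0 : ℝ)..τ, Real.exp (-(κ * u)) := by
      have := intervalIntegral.integral_comp_sub_left (a := (0:ℝ)) (b := τ)
        (fun u => Real.exp (-(κ * u))) τ
      simpa using this
    have e2 : (∫ u in (0 : ℝ)..τ, Real.exp (-(κ * u)))
        = (1 - Real.exp (-(κ * τ))) / κ := by
      have h : (∫ u in (0 : ℝ)..τ, Real.exp ((-κ) * u))
          = (-κ)⁻¹ • ∫ x in ((-κ) * 0)..((-κ) * τ), Real.exp x :=
        intervalIntegral.integral_comp_mul_left Real.exp (by linarith)
      rw [mul_zero, integral_exp, Real.exp_zero, smul_eq_mul] at h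
      have hrw : ∀ u : ℝ, -(κ * u) = (-κ) * u := fun u => by ring
      simp_rw [hrw]
      rw [h, div_eq_inv_mul, inv_neg]
      ring
    calc (∫ s in (0 : ℝ)..τ, g s)
        = (∫ s in (0 : ℝ)..τ, Real.exp (-(κ * (τ - s)))) * (κ * β) := by
          rw [hg_def, intervalIntegral.integral_mul_const]
      _ = (1 - Real.exp (-(κ * τ))) / κ * (κ * β) := by rw [e1, e2]
      _ = β * (1 - Real.exp (-(κ * τ))) := by field_simp
  have hexple : Real.exp (-(κ * τ)) ≤ 1 := by
    rw [← Real.exp_zero]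
    exact Real.exp_le_exp.2 (by nlinarith)
  have habs : |∫ s in (0 : ℝ)..τ, g s| = β * (1 - Real.exp (-(κ * τ))) := by
    rw [hgval]
    exact abs_of_nonneg (by nlinarith)
  refine le_trans (norm_add_le _ _) ?_
  have hfin : Real.exp (-(κ * τ)) * β + β * (1 - Real.exp (-(κ * τ))) = β := by ring
  linarith [h2.trans_eq habs]
end
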